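/- Let f : ℝ^n → ℝ^n be continuously differentiable with global flow φ, and let A ⊆ ℝ^n be a set such that f(x) ≠ 0 for every x ∈ A. Let v be a point in the interior of A. Then there exists t̄₀ > 0 such that for every t̄ ∈ (0, t̄₀] there exists σ > 0 such that: (i) the tube Φ := {φ(t,x) : t ∈ [0,t̄], x ∈ B̄(v,σ)} is contained in the interior of A; and (ii) there exists a closed set Σ ⊆ Φ such that for every q ∈ B̄(v,σ) there is a unique t_q ∈ [0,t̄] with φ(t_q, q) ∈ Σ. -/

import Mathlib

/-!
Put `w = f v ≠ 0`. On a small ball around `v` the field `f` is Lipschitz, bounded, and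
satisfies `⟪w, f y⟫ ≥ ‖w‖² / 2`. For short times, trajectories starting near `v` stay in that
ball, so along each of them `t ↦ ⟪w, φ t q⟫` increases at rate at least `‖w‖² / 2`. It
therefore meets the hyperplane `⟪w, y - v⟫ = σ ‖w‖` exactly once in `[0, t̄]`, provided
`σ ≤ t̄ ‖w‖ / 4`. The section is that hyperplane intersected with the tube. The tube is
compact because Grönwall's inequality makes the flow jointly continuous.
-/

open Set Metric Filter Function Real Topology
open scoped RealInnerProductSpace

section Tube

variable {E : Type*}

def flowTube (φ : ℝ → E → E) (T : ℝ) (K : Set E) : Set E :=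
  {y | ∃ t ∈ Icc (0:ℝ) T, ∃ x ∈ K, y = φ t x}

lemma flowTube_eq_image (φ : ℝ → E → E) (T : ℝ) (K : Set E) :
    flowTube φ T K = uncurry φ '' (Icc 0 T ×ˢ K) := by
  ext y
  constructor
  · rintro ⟨t, ht, x, hx, rfl⟩
    exact ⟨(t, x), ⟨ht, hx⟩, rfl⟩
  · rintro ⟨⟨t, x⟩, ⟨ht, hx⟩, rfl⟩
    exact ⟨t, ht, x, hx, rfl⟩

lemma flowTube_subset {φ : ℝ → E → E} {T : ℝ} {K s : Set E}
    (h : ∀ x ∈ K, MapsTo (φ · x) (Icc 0 T) s) : flowTube φ T K ⊆ s := by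
  rintro _ ⟨t, ht, x, hx, rfl⟩
  exact h x hx ht

lemma IsCompact.flowTube [TopologicalSpace E] {φ : ℝ → E → E} {T : ℝ} {K : Set E}
    (hK : IsCompact K) (hφ : ContinuousOn (uncurry φ) (Icc 0 T ×ˢ K)) :
    IsCompact (flowTube φ T K) := by
  rw [flowTube_eq_image]
  exact (isCompact_Icc.prod hK).image_of_continuousOn hφ

end Tube

section Flow

variable {E : Type*} [NormedAddCommGroup E] [NormedSpace ℝ E]

lemma continuous_of_hasDerivAt {γ γ' : ℝ → E} (hγ : ∀ t, HasDerivAt γ (γ' t) t) :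
    Continuous γ :=
  continuous_iff_continuousAt.2 fun t => (hγ t).continuousAt

lemma mapsTo_closedBall_of_hasDerivAt {f : E → E} {γ : ℝ → E}
    (hγ : ∀ t, HasDerivAt γ (f (γ t)) t) {v : E} {σ M T : ℝ} (hM : 0 ≤ M)
    (hf : ∀ y ∈ closedBall v (σ + M * T), ‖f y‖ < M) (h0 : γ 0 ∈ closedBall v σ) :
    MapsTo γ (Icc 0 T) (closedBall v (σ + M * T)) := by
  have hB : ∀ t, HasDerivAt (fun t => σ + M * t) M t := fun t => by
    simpa using ((hasDerivAt_id t).const_mul M).const_add σ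
  have hnorm : ∀ ⦃t⦄, t ∈ Icc 0 T → ‖γ t - v‖ ≤ σ + M * t := by
    refine image_norm_le_of_norm_deriv_right_lt_deriv_boundary'
      (f := fun t => γ t - v) (f' := fun t => f (γ t)) (B' := fun _ => M)
      ((continuous_of_hasDerivAt hγ).sub continuous_const).continuousOn
      (fun t _ => ((hγ t).sub_const v).hasDerivWithinAt) ?_
      (continuous_of_hasDerivAt hB).continuousOn (fun t _ => (hB t).hasDerivWithinAt) ?_
    · simpa [← dist_eq_norm] using h0
    · intro t ht hγt
      refine hf _ ?_
      rw [mem_closedBall, dist_eq_norm, hγt]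
      gcongr
      exact ht.2.le
  intro t ht
  rw [mem_closedBall, dist_eq_norm]
  exact (hnorm ht).trans (by gcongr; exact ht.2)

variable {f : E → E} {φ : ℝ → E → E}

lemma exists_pos_mapsTo_closedBall_flow [ProperSpace E] (hφ0 : ∀ x, φ 0 x = x)
    (hφ' : ∀ t x, HasDerivAt (fun s => φ s x) (f (φ t x)) t) {v : E} {r : ℝ} (hr : 0 < r)
    (hf : ContinuousOn f (closedBall v r)) :
    ∃ T₀ > 0, ∀ T ≤ T₀, ∀ x ∈ closedBall v (r / 2),
      MapsTo (φ · x) (Icc 0 T) (closedBall v r) := by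
  obtain ⟨C, hC⟩ := (isCompact_closedBall v r).exists_bound_of_continuousOn hf
  set M := max C 0 + 1
  have hM : 0 < M := by positivity
  refine ⟨r / (2 * M), by positivity, fun T hT x hx => ?_⟩
  have hr : r / 2 + M * T ≤ r := by
    have := (le_div_iff₀' (by positivity)).1 hT
    linarith
  refine (mapsTo_closedBall_of_hasDerivAt (hφ' · x) hM.le (fun y hy => ?_)
    (by rwa [hφ0])).mono_right (closedBall_subset_closedBall hr)
  exact (hC y (closedBall_subset_closedBall hr hy)).trans_lt (by linarith [le_max_left C 0])

lemma lipschitzOnWith_flow (hφ0 : ∀ x, φ 0 x = x)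
    (hφ' : ∀ t x, HasDerivAt (fun s => φ s x) (f (φ t x)) t) {K : NNReal} {s U : Set E}
    {T t : ℝ} (hlip : LipschitzOnWith K f s) (hs : ∀ x ∈ U, MapsTo (φ · x) (Icc 0 T) s)
    (ht : t ∈ Icc 0 T) : LipschitzOnWith (exp (K * T)).toNNReal (φ t) U := by
  refine LipschitzOnWith.of_dist_le_mul fun x hx x' hx' => ?_
  have hgronwall := dist_le_of_trajectories_ODE_of_mem (v := fun _ => f) (s := fun _ => s)
    (fun _ _ => hlip) (continuous_of_hasDerivAt (hφ' · x)).continuousOn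
    (fun t _ => (hφ' t x).hasDerivWithinAt) (fun t ht => hs x hx (Ico_subset_Icc_self ht))
    (continuous_of_hasDerivAt (hφ' · x')).continuousOn
    (fun t _ => (hφ' t x').hasDerivWithinAt) (fun t ht => hs x' hx' (Ico_subset_Icc_self ht))
    (by rw [hφ0, hφ0]) t ht
  rw [Real.coe_toNNReal _ (exp_pos _).le, mul_comm]
  refine hgronwall.trans (mul_le_mul_of_nonneg_left ?_ dist_nonneg)
  gcongr
  linarith [ht.2]

lemma continuousOn_uncurry_flow (hφ0 : ∀ x, φ 0 x = x)
    (hφ' : ∀ t x, HasDerivAt (fun s => φ s x) (f (φ t x)) t) {K : NNReal} {s U : Set E}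
    {T : ℝ} (hlip : LipschitzOnWith K f s) (hs : ∀ x ∈ U, MapsTo (φ · x) (Icc 0 T) s) :
    ContinuousOn (uncurry φ) (Icc 0 T ×ˢ U) :=
  continuousOn_prod_of_continuousOn_lipschitzOnWith' _ _
    (fun _ ht => lipschitzOnWith_flow hφ0 hφ' hlip hs ht)
    (fun x _ => (continuous_of_hasDerivAt (hφ' · x)).continuousOn)

end Flow

lemma existsUnique_mem_Icc_eq_of_le_hasDerivAt {g g' : ℝ → ℝ} {a T c : ℝ}
    (hg : ∀ t, HasDerivAt g (g' t) t) (ha : 0 < a) (hg' : ∀ t ∈ Icc 0 T, a ≤ g' t)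
    (hc0 : g 0 ≤ c) (hcT : c ≤ g 0 + a * T) : ∃! t, t ∈ Icc 0 T ∧ g t = c := by
  have hT : 0 ≤ T := nonneg_of_mul_nonneg_right (by linarith) ha
  have hgc : ContinuousOn g (Icc 0 T) := (continuous_of_hasDerivAt hg).continuousOn
  have hderiv : ∀ t ∈ interior (Icc 0 T), a ≤ deriv g t := fun t ht => by
    rw [(hg t).deriv]
    exact hg' t (interior_subset ht)
  have hgrowth : a * (T - 0) ≤ g T - g 0 :=
    (convex_Icc 0 T).mul_sub_le_image_sub_of_le_deriv hgc
      (fun t _ => (hg t).differentiableAt.differentiableWithinAt) hderiv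
      0 (left_mem_Icc.2 hT) T (right_mem_Icc.2 hT) hT
  have hmono : StrictMonoOn g (Icc 0 T) :=
    strictMonoOn_of_deriv_pos (convex_Icc 0 T) hgc fun t ht => ha.trans_le (hderiv t ht)
  obtain ⟨t, ht, hgt⟩ := intermediate_value_Icc hT hgc ⟨hc0, by linarith⟩
  exact ⟨t, ⟨ht, hgt⟩, fun t' ⟨ht', hgt'⟩ => hmono.injOn ht' ht (hgt'.trans hgt.symm)⟩

section InnerProduct

variable {E : Type*} [NormedAddCommGroup E] [InnerProductSpace ℝ E] {f : E → E}

lemma existsUnique_inner_flow_sub_eq {φ : ℝ → E → E} (hφ0 : ∀ x, φ 0 x = x)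
    (hφ' : ∀ t x, HasDerivAt (fun s => φ s x) (f (φ t x)) t) {w v q : E} {a σ T : ℝ}
    (ha : 0 < a) (hf : ∀ t ∈ Icc 0 T, a ≤ ⟪w, f (φ t q)⟫) (hq : q ∈ closedBall v σ)
    (hσ : 2 * (σ * ‖w‖) ≤ a * T) : ∃! t, t ∈ Icc 0 T ∧ ⟪w, φ t q - v⟫ = σ * ‖w‖ := by
  have hqv : |⟪w, q - v⟫| ≤ σ * ‖w‖ := by
    rw [mul_comm]
    exact (abs_real_inner_le_norm w (q - v)).trans
      (mul_le_mul_of_nonneg_left (mem_closedBall_iff_norm.1 hq) (norm_nonneg w))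
  refine existsUnique_mem_Icc_eq_of_le_hasDerivAt (g := fun t => ⟪w, φ t q - v⟫)
    (fun t => (innerSL ℝ w).hasFDerivAt.comp_hasDerivAt t ((hφ' t q).sub_const v))
    ha hf ?_ ?_
  all_goals simp only [hφ0]; linarith [abs_le.1 hqv]

lemma exists_closedBall_lipschitzOnWith_inner_gt (hf : ContDiff ℝ 1 f) {v : E} (hv : f v ≠ 0)
    {s : Set E} (hs : s ∈ 𝓝 v) :
    ∃ r > 0, ∃ K, closedBall v r ⊆ s ∧ LipschitzOnWith K f (closedBall v r) ∧
      ∀ y ∈ closedBall v r, ‖f v‖ ^ 2 / 2 < ⟪f v, f y⟫ := by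
  obtain ⟨K, U, hU, hlip⟩ := (hf.contDiffAt (x := v)).exists_lipschitzOnWith
  have hinner : ∀ᶠ y in 𝓝 v, ‖f v‖ ^ 2 / 2 < ⟪f v, f y⟫ := by
    refine continuousAt_const.eventually_lt
      (continuous_const.inner hf.continuous).continuousAt ?_
    rw [real_inner_self_eq_norm_sq]
    linarith [pow_pos (norm_pos_iff.2 hv) 2]
  obtain ⟨r, hr, hball⟩ := nhds_basis_closedBall.eventually_iff.1
    ((eventually_mem_set.2 hs).and ((eventually_mem_set.2 hU).and hinner))
  exact ⟨r, hr, K, fun y hy => (hball hy).1, hlip.mono fun y hy => (hball hy).2.1,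
    fun y hy => (hball hy).2.2⟩

end InnerProduct

theorem stmt_2_general (n : ℕ)
    (f : EuclideanSpace ℝ (Fin n) → EuclideanSpace ℝ (Fin n))
    (hf : ContDiff ℝ 1 f)
    (φ : ℝ → EuclideanSpace ℝ (Fin n) → EuclideanSpace ℝ (Fin n))
    (hφ0 : ∀ x, φ 0 x = x)
    (hφ' : ∀ (t : ℝ) (x : EuclideanSpace ℝ (Fin n)),
      HasDerivAt (fun s => φ s x) (f (φ t x)) t)
    (A : Set (EuclideanSpace ℝ (Fin n))) (hA : ∀ x ∈ A, f x ≠ 0)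
    (v : EuclideanSpace ℝ (Fin n)) (hv : v ∈ interior A) :
    ∃ tbar0 > (0:ℝ), ∀ tbar ∈ Ioc (0:ℝ) tbar0, ∃ σ > (0:ℝ),
      {y | ∃ t ∈ Icc (0:ℝ) tbar, ∃ x ∈ closedBall v σ, y = φ t x} ⊆ interior A ∧
      ∃ S : Set (EuclideanSpace ℝ (Fin n)), IsClosed S ∧
        S ⊆ {y | ∃ t ∈ Icc (0:ℝ) tbar, ∃ x ∈ closedBall v σ, y = φ t x} ∧
        ∀ q ∈ closedBall v σ, ∃! tq, tq ∈ Icc (0:ℝ) tbar ∧ φ tq q ∈ S := by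
  have hfv : f v ≠ 0 := hA v (interior_subset hv)
  obtain ⟨r, hr, K, hrA, hlip, hinner⟩ :=
    exists_closedBall_lipschitzOnWith_inner_gt hf hfv (isOpen_interior.mem_nhds hv)
  set w := f v
  have hw : 0 < ‖w‖ := norm_pos_iff.2 hfv
  obtain ⟨T₀, hT₀, hstay⟩ :=
    exists_pos_mapsTo_closedBall_flow hφ0 hφ' hr hf.continuous.continuousOn
  refine ⟨T₀, hT₀, fun tbar ⟨htbar, htbarT₀⟩ => ?_⟩
  set σ := min (r / 2) (tbar * ‖w‖ / 4)
  have hstay : ∀ x ∈ closedBall v σ, MapsTo (φ · x) (Icc 0 tbar) (closedBall v r) :=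
    fun x hx => hstay tbar htbarT₀ x (closedBall_subset_closedBall (min_le_left _ _) hx)
  have htube : IsCompact (flowTube φ tbar (closedBall v σ)) :=
    (isCompact_closedBall v σ).flowTube (continuousOn_uncurry_flow hφ0 hφ' hlip hstay)
  refine ⟨σ, by positivity, (flowTube_subset hstay).trans hrA,
    flowTube φ tbar (closedBall v σ) ∩ {y | ⟪w, y - v⟫ = σ * ‖w‖},
    htube.isClosed.inter (isClosed_eq (by fun_prop) continuous_const), inter_subset_left,
    fun q hq => ?_⟩
  have hσw : 2 * (σ * ‖w‖) ≤ ‖w‖ ^ 2 / 2 * tbar := by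
    nlinarith [mul_le_mul_of_nonneg_right (min_le_right (r / 2) (tbar * ‖w‖ / 4)) hw.le]
  obtain ⟨t, ⟨ht, hgt⟩, huniq⟩ := existsUnique_inner_flow_sub_eq hφ0 hφ' (by positivity)
    (fun t ht => (hinner _ (hstay q hq ht)).le) hq hσw
  exact ⟨t, ⟨ht, ⟨t, ht, q, hq, rfl⟩, hgt⟩,
    fun t' ⟨ht', _, hgt'⟩ => huniq t' ⟨ht', hgt'⟩⟩

/-- Near an interior point `v` of a set `A` on which the vector field `f` has no
equilibria, a sufficiently short flow tube stays in the interior of `A` and admits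
a forward local section. -/
theorem stmt_2 (n : ℕ) (hn : 1 ≤ n)
    (f : EuclideanSpace ℝ (Fin n) → EuclideanSpace ℝ (Fin n))
    (hf : ContDiff ℝ 1 f)
    (φ : ℝ → EuclideanSpace ℝ (Fin n) → EuclideanSpace ℝ (Fin n))
    (hφ0 : ∀ x, φ 0 x = x)
    (hφ' : ∀ (t : ℝ) (x : EuclideanSpace ℝ (Fin n)),
      HasDerivAt (fun s => φ s x) (f (φ t x)) t)
    (A : Set (EuclideanSpace ℝ (Fin n))) (hA : ∀ x ∈ A, f x ≠ 0)
    (v : EuclideanSpace ℝ (Fin n)) (hv : v ∈ interior A) :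
    ∃ tbar0 > (0:ℝ), ∀ tbar ∈ Ioc (0:ℝ) tbar0, ∃ σ > (0:ℝ),
      {y | ∃ t ∈ Icc (0:ℝ) tbar, ∃ x ∈ closedBall v σ, y = φ t x} ⊆ interior A ∧
      ∃ S : Set (EuclideanSpace ℝ (Fin n)), IsClosed S ∧
        S ⊆ {y | ∃ t ∈ Icc (0:ℝ) tbar, ∃ x ∈ closedBall v σ, y = φ t x} ∧
        ∀ q ∈ closedBall v σ, ∃! tq, tq ∈ Icc (0:ℝ) tbar ∧ φ tq q ∈ S :=
  stmt_2_general n f hf φ hφ0 hφ' A hA v hv
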